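/- arXiv:math/0411082 — 3 statements merged into one kernel-verified Lean document; each statement's English description precedes it below -/
import Mathlib

section
/- Let m be a family of coefficients indexed by pairs λ1 ≥ λ2 ≥ 0, let f = Σ m(λ1,λ2)·S_{(λ1,λ2)}(x,y) ∈ ℚ[[x,y]], and let M'(f)(t,v) = Σ_{λ1≥λ2≥0} m(λ1,λ2)·t^{λ1−λ2}v^{λ2} ∈ ℚ[[t,v]] be its multiplicity series. Then in ℚ[[x,y]] one has the identity (x − y)·f(x,y) = x·M'(f)(x,xy) − y·M'(f)(y,xy), where M'(f)(x,xy) and M'(f)(y,xy) denote substitution of t := x (resp. t := y) and v := xy into M'(f) (both substituted series have zero constant term, so the substitutions are well defined). -/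
/-!
For a single Schur function, with `d = λ₁ - λ₂`, the geometric sum gives
`(x - y) S_{(λ₁,λ₂)} = (xy)^{λ₂} (x^{d+1} - y^{d+1}) = x · x^d (xy)^{λ₂} - y · y^d (xy)^{λ₂}`,
and `x^d (xy)^{λ₂}`, `y^d (xy)^{λ₂}` are the terms of `M'(f)(x,xy)`, `M'(f)(y,xy)`.
The identity is the sum of these over `λ`. The sum may be taken coefficientwise, because
`f` and both substituted series are expansions `∑ m(λ₁,λ₂) g(λ₁,λ₂)` with `g(λ₁,λ₂)` of order
at least `λ₁`: a coefficient of total degree `k` only sees `λ₁ ≤ k`, and multiplying by a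
variable shifts this window by exactly one, the same for all three series.
-/

open Finset

abbrev Q2 : Type := MvPowerSeries (Fin 2) ℚ

noncomputable def Xv (i : Fin 2) : Q2 := MvPowerSeries.X i

noncomputable def mon (i j : ℕ) : Fin 2 →₀ ℕ := Finsupp.single 0 i + Finsupp.single 1 j

noncomputable def c (i j : ℕ) (f : Q2) : ℚ := MvPowerSeries.coeff (mon i j) f

/-- Schur function S_{(l1,l2)}(x,y) for l1 ≥ l2. -/
noncomputable def schur (l1 l2 : ℕ) : Q2 :=
  (Xv 0 * Xv 1) ^ l2 * ∑ i ∈ range (l1 - l2 + 1), Xv 0 ^ i * Xv 1 ^ (l1 - l2 - i)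

/-- f = Σ_{l1 ≥ l2 ≥ 0} m(l1,l2) · S_{(l1,l2)}, expressed coefficientwise
(each coefficient receives only finitely many contributions, since `schur l1 l2`
is homogeneous of degree `l1 + l2`). -/
def IsSchurExpansion (m : ℕ → ℕ → ℚ) (f : Q2) : Prop :=
  ∀ i j : ℕ, c i j f =
    ∑ l1 ∈ range (i + j + 1), ∑ l2 ∈ range (l1 + 1), m l1 l2 * c i j (schur l1 l2)

/-- h(t,v) = Σ_{l1 ≥ l2 ≥ 0} m(l1,l2) t^{l1-l2} v^{l2}, the multiplicity series. -/
def IsMultSeries (m : ℕ → ℕ → ℚ) (h : Q2) : Prop :=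
  ∀ p q : ℕ, c p q h = m (p + q) q

/-- Substitution of φ0, φ1 (series with zero constant term) for the two variables of h:
the coefficient of a monomial e in h(φ0,φ1) only receives contributions from monomials
t^p v^q of h with p + q ≤ |e|. -/
noncomputable def subst2 (φ0 φ1 h : Q2) : Q2 :=
  fun e => ∑ p ∈ range (e 0 + e 1 + 1), ∑ q ∈ range (e 0 + e 1 + 1),
    MvPowerSeries.coeff (mon p q) h * MvPowerSeries.coeff e (φ0 ^ p * φ1 ^ q)

/-- Substitution of a series φ with zero constant term into a one-variable series a. -/
noncomputable def substP (φ : Q2) (a : PowerSeries ℚ) : Q2 :=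
  fun e => ∑ k ∈ range (e 0 + e 1 + 1),
    PowerSeries.coeff k a * MvPowerSeries.coeff e (φ ^ k)

open MvPowerSeries

section TriangularExpansion

variable {σ R : Type*} [CommSemiring R]

theorem coeff_pow_mul_pow_eq_zero {φ ψ : MvPowerSeries σ R} (hφ : constantCoeff φ = 0)
    (hψ : constantCoeff ψ = 0) {e : σ →₀ ℕ} {p q : ℕ} (he : e.degree < p + q) :
    coeff e (φ ^ p * ψ ^ q) = 0 := by
  refine coeff_of_lt_order (lt_of_lt_of_le ?_ le_order_mul)
  calc ((e.degree : ℕ) : ℕ∞) < p + q := by exact_mod_cast he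
    _ ≤ (φ ^ p).order + (ψ ^ q).order :=
      add_le_add (le_order_pow_of_constantCoeff_eq_zero p hφ)
        (le_order_pow_of_constantCoeff_eq_zero q hψ)

/-- `F = ∑_{l₂ ≤ l₁} m l₁ l₂ • g l₁ l₂`, read coefficientwise with the sum at `e` cut off at
`l₁ ≤ e.degree`; this is legitimate when `g l₁ l₂` has order at least `l₁`. -/
def HasTriangularExpansion (m : ℕ → ℕ → R) (g : ℕ → ℕ → MvPowerSeries σ R)
    (F : MvPowerSeries σ R) : Prop :=
  ∀ e : σ →₀ ℕ, coeff e F =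
    ∑ l1 ∈ range (e.degree + 1), ∑ l2 ∈ range (l1 + 1), m l1 l2 * coeff e (g l1 l2)

variable {m : ℕ → ℕ → R} {g : ℕ → ℕ → MvPowerSeries σ R} {F : MvPowerSeries σ R}

theorem HasTriangularExpansion.coeff_X_mul (hF : HasTriangularExpansion m g F) (s : σ)
    (e : σ →₀ ℕ) :
    coeff e (X s * F) =
      ∑ l1 ∈ range e.degree, ∑ l2 ∈ range (l1 + 1), m l1 l2 * coeff e (X s * g l1 l2) := by
  by_cases hs : Finsupp.single s 1 ≤ e
  · obtain ⟨e', rfl⟩ := exists_add_of_le hs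
    simp only [X_def, coeff_add_monomial_mul, one_mul, map_add, Finsupp.degree_single]
    rw [hF e', add_comm 1]
  · simp [X_def, coeff_monomial_mul, hs]

end TriangularExpansion

theorem HasTriangularExpansion.coeff_X_mul_sub_X_mul {σ R : Type*} [CommRing R]
    {m : ℕ → ℕ → R} {g g' : ℕ → ℕ → MvPowerSeries σ R} {F F' : MvPowerSeries σ R}
    (hF : HasTriangularExpansion m g F) (hF' : HasTriangularExpansion m g' F') (s t : σ)
    (e : σ →₀ ℕ) :
    coeff e (X s * F - X t * F') =
      ∑ l1 ∈ range e.degree, ∑ l2 ∈ range (l1 + 1),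
        m l1 l2 * coeff e (X s * g l1 l2 - X t * g' l1 l2) := by
  simp only [map_sub, mul_sub, hF.coeff_X_mul, hF'.coeff_X_mul, sum_sub_distrib]

theorem mon_apply_self (e : Fin 2 →₀ ℕ) : mon (e 0) (e 1) = e := by
  ext s
  fin_cases s <;> simp [mon]

theorem Finsupp.degree_fin_two (e : Fin 2 →₀ ℕ) : e.degree = e 0 + e 1 := by
  rw [Finsupp.degree_eq_sum, Fin.sum_univ_two]

theorem IsSchurExpansion.hasTriangularExpansion {m : ℕ → ℕ → ℚ} {f : Q2}
    (hf : IsSchurExpansion m f) : HasTriangularExpansion m schur f := by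
  intro e
  simpa only [c, mon_apply_self, Finsupp.degree_fin_two] using hf (e 0) (e 1)

theorem IsMultSeries.hasTriangularExpansion_subst2 {m : ℕ → ℕ → ℚ} {h φ ψ : Q2}
    (hh : IsMultSeries m h) (hφ : constantCoeff φ = 0) (hψ : constantCoeff ψ = 0) :
    HasTriangularExpansion m (fun l1 l2 => φ ^ (l1 - l2) * ψ ^ l2) (subst2 φ ψ h) := by
  intro e
  have hcoeff (p q : ℕ) : coeff (mon p q) h = m (p + q) q := hh p q
  rw [Finsupp.degree_fin_two]
  set n := e 0 + e 1 + 1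
  calc coeff e (subst2 φ ψ h)
      = ∑ p ∈ range n, ∑ q ∈ range n, m (p + q) q * coeff e (φ ^ p * ψ ^ q) := by
        simp only [coeff_apply, subst2, hcoeff]; rfl
    _ = ∑ q ∈ range n, ∑ p ∈ range (n - q), m (p + q) q * coeff e (φ ^ p * ψ ^ q) := by
        rw [Finset.sum_comm]
        refine sum_congr rfl fun q _ => (sum_subset (range_mono (Nat.sub_le n q)) ?_).symm
        intro p _ hp
        have hdeg : e.degree < p + q := by
          rw [mem_range, not_lt] at hp
          rw [Finsupp.degree_fin_two]
          omega
        rw [coeff_pow_mul_pow_eq_zero hφ hψ hdeg, mul_zero]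
    _ = ∑ l1 ∈ range n, ∑ l2 ∈ range (l1 + 1),
          m (l1 - l2 + l2) l2 * coeff e (φ ^ (l1 - l2) * ψ ^ l2) :=
        (sum_range_diag_flip n fun q p => m (p + q) q * coeff e (φ ^ p * ψ ^ q)).symm
    _ = _ := by
        refine sum_congr rfl fun l1 _ => sum_congr rfl fun l2 hl2 => ?_
        rw [Nat.sub_add_cancel (Nat.lt_succ_iff.1 (mem_range.1 hl2))]

theorem sub_mul_schur (l1 l2 : ℕ) :
    (Xv 0 - Xv 1) * schur l1 l2 =
      Xv 0 * (Xv 0 ^ (l1 - l2) * (Xv 0 * Xv 1) ^ l2) -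
        Xv 1 * (Xv 1 ^ (l1 - l2) * (Xv 0 * Xv 1) ^ l2) := by
  have hgeom := geom_sum₂_mul (Xv 0) (Xv 1) (l1 - l2 + 1)
  simp only [add_tsub_cancel_right] at hgeom
  rw [schur, mul_left_comm, ← mul_comm _ (Xv 0 - Xv 1), hgeom]
  ring

/-- identity (2) of the paper:
(x − y)·f(x,y) = x·M'(f)(x,xy) − y·M'(f)(y,xy). -/
theorem multiplicity_series_identity
    (m : ℕ → ℕ → ℚ) (f h : Q2)
    (hf : IsSchurExpansion m f) (hh : IsMultSeries m h) :
    (Xv 0 - Xv 1) * f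
      = Xv 0 * subst2 (Xv 0) (Xv 0 * Xv 1) h - Xv 1 * subst2 (Xv 1) (Xv 0 * Xv 1) h := by
  have hX (s : Fin 2) : constantCoeff (Xv s) = 0 := constantCoeff_X s
  have hXY : constantCoeff (Xv 0 * Xv 1) = 0 := by rw [map_mul, hX, zero_mul]
  have hF := hf.hasTriangularExpansion
  have hS (s : Fin 2) := hh.hasTriangularExpansion_subst2 (hX s) hXY
  ext e
  change coeff e ((X 0 - X 1) * f) = coeff e (X 0 * _ - X 1 * _)
  rw [sub_mul, hF.coeff_X_mul_sub_X_mul hF 0 1, (hS 0).coeff_X_mul_sub_X_mul (hS 1) 0 1]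
  refine sum_congr rfl fun l1 _ => sum_congr rfl fun l2 _ => ?_
  rw [← sub_mul]
  exact congrArg (fun P => m l1 l2 * coeff e P) (sub_mul_schur l1 l2)
end

section
/- (Lemma 1, equation (4).) Let m be a family of coefficients indexed by pairs λ1 ≥ λ2 ≥ 0, let f = Σ m(λ1,λ2)·S_{(λ1,λ2)}(x,y) ∈ ℚ[[x,y]], and let h(t,v) = M'(f)(t,v) be its multiplicity series. Let g(t,v) = M'( f·((1−x)(1−y))^{-1} )(t,v) be the multiplicity series of f·((1−x)(1−y))^{-1} (the inverse exists since (1−x)(1−y) has constant term 1). Then in ℚ[[t,v]]: (1−t)(t−v)·g(t,v) = t·h(t,v) − v·h(v,v), where h(v,v) denotes the substitution t := v in h. -/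
open Finset

/-!
Multiplicities are read off coefficients: if `F = Σ μ(λ) S_λ`, then for `q ≤ n` the coefficient
`μ(n,q)` is `[xⁿ y^q] F - [x^{n+1} y^{q-1}] F`. With `F = f·((1-x)(1-y))⁻¹` we have
`f = (1-y)·((1-x)F)`, and summing over `q` telescopes the factor `1-y` away: the row sums
`Σ_{l ≤ q} m(n,l)` are the multiplicities extracted from `(1-x)F`. Comparing with the
multiplicities `m2` of `F` (using the symmetry of `F` on the diagonal) shows that `(1-t)·g` has
coefficient `Σ_{l ≤ q} m(p+q,l)` at `t^p v^q`, and multiplying by `t - v` telescopes these row sums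
into `t·h(t,v) - v·h(v,v)`. Both `x, y` and `t, v` are the variables `Xv 0, Xv 1`.
-/

lemma mon_inj {i j a b : ℕ} : mon i j = mon a b ↔ i = a ∧ j = b := by
  refine ⟨fun h => ⟨?_, ?_⟩, fun ⟨hi, hj⟩ => hi ▸ hj ▸ rfl⟩
  · simpa [mon] using DFunLike.congr_fun h 0
  · simpa [mon] using DFunLike.congr_fun h 1

lemma mon_succ_left (i j : ℕ) : mon (i + 1) j = Finsupp.single 0 1 + mon i j := by
  simp only [mon, Finsupp.single_add]; abel

lemma mon_succ_right (i j : ℕ) : mon i (j + 1) = Finsupp.single 1 1 + mon i j := by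
  simp only [mon, Finsupp.single_add]; abel

@[simp] lemma c_X0_mul_zero (j : ℕ) (φ : Q2) : c 0 j (Xv 0 * φ) = 0 := by
  rw [c, Xv, MvPowerSeries.X_def, MvPowerSeries.coeff_monomial_mul, if_neg (by simp [mon])]

@[simp] lemma c_X1_mul_zero (i : ℕ) (φ : Q2) : c i 0 (Xv 1 * φ) = 0 := by
  rw [c, Xv, MvPowerSeries.X_def, MvPowerSeries.coeff_monomial_mul, if_neg (by simp [mon])]

@[simp] lemma c_X0_mul_succ (i j : ℕ) (φ : Q2) : c (i + 1) j (Xv 0 * φ) = c i j φ := by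
  rw [c, mon_succ_left, Xv, MvPowerSeries.X_def, MvPowerSeries.coeff_add_monomial_mul, one_mul, c]

@[simp] lemma c_X1_mul_succ (i j : ℕ) (φ : Q2) : c i (j + 1) (Xv 1 * φ) = c i j φ := by
  rw [c, mon_succ_right, Xv, MvPowerSeries.X_def, MvPowerSeries.coeff_add_monomial_mul, one_mul, c]

@[simp] lemma c_sub (i j : ℕ) (φ ψ : Q2) : c i j (φ - ψ) = c i j φ - c i j ψ := map_sub _ _ _

lemma c_sum {ι : Type*} (i j : ℕ) (s : Finset ι) (φ : ι → Q2) :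
    c i j (∑ k ∈ s, φ k) = ∑ k ∈ s, c i j (φ k) := map_sum _ _ _

lemma c_X_pow_mul_X_pow (i j a b : ℕ) :
    c i j (Xv 0 ^ a * Xv 1 ^ b) = if i = a ∧ j = b then 1 else 0 := by
  rw [c, Xv, Xv, MvPowerSeries.X_pow_eq, MvPowerSeries.X_pow_eq,
    MvPowerSeries.monomial_mul_monomial, one_mul, ← mon, MvPowerSeries.coeff_monomial]
  simp only [mon_inj]

lemma eq_of_forall_c_eq {φ ψ : Q2} (h : ∀ i j, c i j φ = c i j ψ) : φ = ψ := by
  refine MvPowerSeries.ext fun e => ?_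
  have he : e = mon (e 0) (e 1) := by ext k; fin_cases k <;> simp [mon]
  rw [he]; exact h _ _

lemma sum_c_one_sub_X1_mul (i q : ℕ) (φ : Q2) :
    ∑ l ∈ range (q + 1), c i l ((1 - Xv 1) * φ) = c i q φ := by
  induction q with
  | zero => simp [sub_mul]
  | succ q ih => rw [sum_range_succ, ih, sub_mul, one_mul, c_sub, c_X1_mul_succ]; ring

lemma c_schur {l1 l2 : ℕ} (h : l2 ≤ l1) (i j : ℕ) :
    c i j (schur l1 l2) = if i + j = l1 + l2 ∧ l2 ≤ i ∧ l2 ≤ j then 1 else 0 := by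
  have hterm : ∀ k ∈ range (l1 - l2 + 1),
      c i j ((Xv 0 * Xv 1) ^ l2 * (Xv 0 ^ k * Xv 1 ^ (l1 - l2 - k)))
        = if k = i - l2 then (if i + j = l1 + l2 ∧ l2 ≤ i ∧ l2 ≤ j then 1 else 0) else 0 := by
    intro k hk
    rw [mem_range] at hk
    rw [mul_pow, mul_mul_mul_comm, ← pow_add, ← pow_add, c_X_pow_mul_X_pow, ← ite_and]
    exact if_congr (by omega) rfl rfl
  rw [schur, mul_sum, c_sum, sum_congr rfl hterm, sum_ite_eq', ← ite_and]
  exact if_congr (by rw [mem_range]; omega) rfl rfl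

namespace IsSchurExpansion

variable {μ : ℕ → ℕ → ℚ} {F : Q2}

lemma c_eq (hF : IsSchurExpansion μ F) (i j : ℕ) :
    c i j F = ∑ l1 ∈ Icc (max i j) (i + j), μ l1 (i + j - l1) := by
  have hrow : ∀ l1 ∈ range (i + j + 1),
      ∑ l2 ∈ range (l1 + 1), μ l1 l2 * c i j (schur l1 l2)
        = if max i j ≤ l1 then μ l1 (i + j - l1) else 0 := by
    intro l1 hl1
    rw [mem_range] at hl1
    have hterm : ∀ l2 ∈ range (l1 + 1), μ l1 l2 * c i j (schur l1 l2)
        = if i + j - l1 = l2 then (if max i j ≤ l1 then μ l1 l2 else 0) else 0 := by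
      intro l2 hl2
      rw [mem_range] at hl2
      rw [c_schur (by omega), mul_ite, mul_one, mul_zero, ← ite_and]
      exact if_congr (by omega) rfl rfl
    rw [sum_congr rfl hterm, sum_ite_eq, ← ite_and]
    exact if_congr (by rw [mem_range]; omega) rfl rfl
  rw [hF, sum_congr rfl hrow, ← sum_filter]
  congr 1
  ext l1
  simp only [mem_filter, mem_range, mem_Icc]
  omega

lemma c_comm (hF : IsSchurExpansion μ F) (i j : ℕ) : c i j F = c j i F := by
  rw [hF.c_eq, hF.c_eq, max_comm, add_comm]

end IsSchurExpansion

/-- The second term is the coefficient of `x^{n+1} y^{q-1}`, read as `0` when `q = 0`. -/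
noncomputable def multCoeff (φ : Q2) (n q : ℕ) : ℚ := c n q φ - c (n + 1) q (Xv 1 * φ)

lemma IsSchurExpansion.eq_multCoeff {μ : ℕ → ℕ → ℚ} {F : Q2} (hF : IsSchurExpansion μ F)
    {n q : ℕ} (hqn : q ≤ n) : μ n q = multCoeff F n q := by
  rcases q with _ | q
  · simp [multCoeff, hF.c_eq]
  · rw [multCoeff, c_X1_mul_succ, hF.c_eq, hF.c_eq, max_eq_left hqn, max_eq_left (by omega),
      Icc_eq_cons_Ioc (by omega), sum_cons, ← Icc_add_one_left_eq_Ioc,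
      show n + 1 + q = n + (q + 1) by omega, Nat.add_sub_cancel_left, add_sub_cancel_right]

lemma multCoeff_sub (φ ψ : Q2) (n q : ℕ) :
    multCoeff (φ - ψ) n q = multCoeff φ n q - multCoeff ψ n q := by
  simp only [multCoeff, mul_sub, c_sub]; ring

lemma multCoeff_X0_mul_succ (φ : Q2) (n q : ℕ) :
    multCoeff (Xv 0 * φ) (n + 1) q = multCoeff φ n q := by
  rw [multCoeff, multCoeff, mul_left_comm, c_X0_mul_succ, c_X0_mul_succ]

lemma multCoeff_X0_mul_self {φ : Q2} (hφ : ∀ i j, c i j φ = c j i φ) (q : ℕ) :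
    multCoeff (Xv 0 * φ) q q = 0 := by
  rcases q with _ | q
  · simp [multCoeff]
  · rw [multCoeff, mul_left_comm, c_X0_mul_succ, c_X0_mul_succ, c_X1_mul_succ, hφ, sub_self]

lemma sum_multCoeff_one_sub_X1_mul (φ : Q2) (n q : ℕ) :
    ∑ l ∈ range (q + 1), multCoeff ((1 - Xv 1) * φ) n l = multCoeff φ n q := by
  rw [multCoeff, ← sum_c_one_sub_X1_mul n q φ, ← sum_c_one_sub_X1_mul (n + 1) q (Xv 1 * φ),
    ← sum_sub_distrib]
  simp only [multCoeff, mul_left_comm (Xv 1)]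

lemma c_subst2 (φ0 φ1 h : Q2) (a b : ℕ) :
    c a b (subst2 φ0 φ1 h) = ∑ p ∈ range (a + b + 1), ∑ q ∈ range (a + b + 1),
      c p q h * c a b (φ0 ^ p * φ1 ^ q) := by
  rw [c, MvPowerSeries.coeff_apply, subst2]
  simp [mon, c]

lemma c_X1_pow_mul_X1_pow (a b p q : ℕ) :
    c a b (Xv 1 ^ p * Xv 1 ^ q) = if a = 0 ∧ b = p + q then 1 else 0 := by
  rw [← pow_add, ← one_mul (Xv 1 ^ _), ← pow_zero (Xv 0), c_X_pow_mul_X_pow]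

lemma c_subst2_X1_X1_succ (h : Q2) (a b : ℕ) : c (a + 1) b (subst2 (Xv 1) (Xv 1) h) = 0 := by
  simp [c_subst2, c_X1_pow_mul_X1_pow]

lemma c_subst2_X1_X1_zero (h : Q2) (b : ℕ) :
    c 0 b (subst2 (Xv 1) (Xv 1) h) = ∑ l ∈ range (b + 1), c (b - l) l h := by
  rw [c_subst2, zero_add, sum_comm]
  refine sum_congr rfl fun l hl => ?_
  rw [mem_range] at hl
  have hterm : ∀ p ∈ range (b + 1), c p l h * c 0 b (Xv 1 ^ p * Xv 1 ^ l)
      = if p = b - l then c p l h else 0 := by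
    intro p _
    rw [c_X1_pow_mul_X1_pow, mul_ite, mul_one, mul_zero]
    exact if_congr (by omega) rfl rfl
  rw [sum_congr rfl hterm, sum_ite_eq', if_pos (by rw [mem_range]; omega)]

lemma X0_sub_X1_mul_eq_of_c_eq {m : ℕ → ℕ → ℚ} {h K : Q2} (hh : IsMultSeries m h)
    (hK : ∀ p q, c p q K = ∑ l ∈ range (q + 1), m (p + q) l) :
    (Xv 0 - Xv 1) * K = Xv 0 * h - Xv 1 * subst2 (Xv 1) (Xv 1) h := by
  unfold IsMultSeries at hh
  refine eq_of_forall_c_eq fun p q => ?_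
  rw [sub_mul, c_sub, c_sub]
  rcases p with _ | p <;> rcases q with _ | q
  · simp
  · simp only [c_X0_mul_zero, c_X1_mul_succ, hK, c_subst2_X1_X1_zero, hh, zero_add]
    congr 1
    exact sum_congr rfl fun l hl => by rw [Nat.sub_add_cancel (by simp at hl; omega)]
  · simp [hK, hh]
  · simp only [c_X0_mul_succ, c_X1_mul_succ, hK, hh, c_subst2_X1_X1_succ, sum_range_succ _ (q + 1),
      show p + 1 + q = p + (q + 1) by omega]
    ring

lemma c_one_sub_X0_mul_eq_sum {m m2 : ℕ → ℕ → ℚ} {f F g : Q2} (hf : IsSchurExpansion m f)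
    (hF : IsSchurExpansion m2 F) (hfF : f = (1 - Xv 1) * ((1 - Xv 0) * F))
    (hg : IsMultSeries m2 g) (p q : ℕ) :
    c p q ((1 - Xv 0) * g) = ∑ l ∈ range (q + 1), m (p + q) l := by
  have hrow : ∑ l ∈ range (q + 1), m (p + q) l = multCoeff ((1 - Xv 0) * F) (p + q) q := by
    rw [← sum_multCoeff_one_sub_X1_mul, ← hfF]
    exact sum_congr rfl fun l hl => hf.eq_multCoeff (by simp at hl; omega)
  rw [hrow, sub_mul, sub_mul, one_mul, one_mul, multCoeff_sub, c_sub, hg,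
    ← hF.eq_multCoeff le_add_self]
  rcases p with _ | p
  · rw [c_X0_mul_zero, zero_add, multCoeff_X0_mul_self hF.c_comm]
  · rw [c_X0_mul_succ, hg, show p + 1 + q = p + q + 1 by omega, multCoeff_X0_mul_succ,
      hF.eq_multCoeff le_add_self]

/-- Lemma 1, equation (4): if h = M'(f) and g = M'(f·((1−x)(1−y))⁻¹),
then (1−t)(t−v)·g(t,v) = t·h(t,v) − v·h(v,v).
Here the two variables of the ring of g and h are t = Xv 0 and v = Xv 1. -/
theorem operator_Y_formula
    (m m2 : ℕ → ℕ → ℚ) (f h g : Q2)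
    (hf : IsSchurExpansion m f) (hh : IsMultSeries m h)
    (hg2 : IsSchurExpansion m2 (f * ((1 - Xv 0) * (1 - Xv 1))⁻¹))
    (hg : IsMultSeries m2 g) :
    (1 - Xv 0) * (Xv 0 - Xv 1) * g = Xv 0 * h - Xv 1 * subst2 (Xv 1) (Xv 1) h := by
  have hunit : MvPowerSeries.constantCoeff ((1 - Xv 0) * (1 - Xv 1)) ≠ 0 := by simp [Xv]
  have hfF : f = (1 - Xv 1) * ((1 - Xv 0) * (f * ((1 - Xv 0) * (1 - Xv 1))⁻¹)) := by
    rw [← mul_assoc, mul_comm (1 - Xv 1), mul_comm, mul_assoc,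
      MvPowerSeries.inv_mul_cancel _ hunit, mul_one]
  rw [mul_comm (1 - Xv 0), mul_assoc]
  exact X0_sub_X1_mul_eq_of_c_eq hh (c_one_sub_X0_mul_eq_sum hf hg2 hfF hg)
end

section
/- (Corollary 5, first asymptotic.) Let W(t,v) = (h₃(v)t³+h₂(v)t²+h₁(v)t+h₀(v))·((1−v)⁷(1+v)⁴(1+v²)(1−t)³(1+t)(1−vt))^{-1} ∈ ℚ[[t,v]], with h₃(v) = v²(v⁴−v³+3v²−v+1), h₂(v) = v(2v⁴−4v³+v²−v−1), h₁(v) = v(−v⁴−v³+v²−4v+2), h₀(v) = v⁴−v³+3v²−v+1, and for λ1 ≥ λ2 ≥ 0 let m(λ1,λ2) be the coefficient of t^{λ1−λ2}v^{λ2} in W. Then there exists a constant C > 0 such that for all integers λ1 > 2λ2 ≥ 0: |m(λ1,λ2) − ( λ2⁷/(7!·2⁵) + (λ1−λ2)·λ2⁶/(6!·2⁴) + (λ1−λ2)²·λ2⁵/(5!·2⁴) )| ≤ C·(λ1+λ2+1)⁶. -/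
open Finset

/-- Hilbert series of the mixed trace algebra T₂ of two generic 3×3 matrices
(Berele–Stembridge), with x = Xv 0, y = Xv 1. -/
noncomputable def Hseries : Q2 :=
  ((1 - Xv 0) ^ 2 * (1 - Xv 1) ^ 2 * (1 - Xv 0 ^ 2) * (1 - Xv 1 ^ 2)
    * (1 - Xv 0 * Xv 1) ^ 2 * (1 - Xv 0 ^ 2 * Xv 1) * (1 - Xv 0 * Xv 1 ^ 2))⁻¹

/-- W(t,v), the multiplicity series of Theorem 2, with t = Xv 0, v = Xv 1;
h₃(v) = v²(v⁴−v³+3v²−v+1), h₂(v) = v(2v⁴−4v³+v²−v−1),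
h₁(v) = v(−v⁴−v³+v²−4v+2), h₀(v) = v⁴−v³+3v²−v+1. -/
noncomputable def Wseries : Q2 :=
  (Xv 1 ^ 2 * (Xv 1 ^ 4 - Xv 1 ^ 3 + 3 * Xv 1 ^ 2 - Xv 1 + 1) * Xv 0 ^ 3
    + Xv 1 * (2 * Xv 1 ^ 4 - 4 * Xv 1 ^ 3 + Xv 1 ^ 2 - Xv 1 - 1) * Xv 0 ^ 2
    + Xv 1 * (-Xv 1 ^ 4 - Xv 1 ^ 3 + Xv 1 ^ 2 - 4 * Xv 1 + 2) * Xv 0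
    + (Xv 1 ^ 4 - Xv 1 ^ 3 + 3 * Xv 1 ^ 2 - Xv 1 + 1))
  * ((1 - Xv 1) ^ 7 * (1 + Xv 1) ^ 4 * (1 + Xv 1 ^ 2)
      * (1 - Xv 0) ^ 3 * (1 + Xv 0) * (1 - Xv 1 * Xv 0))⁻¹

/-!
Over the fraction field, `1024 W` splits into partial fractions
`P₃(v) / (1 - t)³ + P₂(v) / (1 - t)² + P₁(v) / (1 - t) + Q(v) / (1 + t) + D(v) / (1 - v t)`,
where `P₃, P₂, P₁` have the leading pieces `128 (1 - v)⁻⁶`, `64 (1 - v)⁻⁷`, `32 (1 - v)⁻⁸`.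
The coefficients of `D(v) / (1 - v t)` live on `a ≤ b`, so for `a = λ₁ - λ₂ > b = λ₂` the
coefficient of `tᵃ vᵇ` is `C(a + 2, 2) [vᵇ] P₃ + (a + 1) [vᵇ] P₂ + [vᵇ] P₁ + (-1)ᵃ [vᵇ] Q`.
Since `[vⁿ] (1 ∓ v)^-(d+1) = ± C(n + d, d) = ± nᵈ / d! + O(nᵈ⁻¹)`, the three leading pieces give
the main term and everything else is `O((a + b + 1)⁶)`.
-/

open PowerSeries Asymptotics Filter

instance : IsDomain Q2 := NoZeroDivisors.to_isDomain _

local notation "inT" => PowerSeries.toMvPowerSeries (R := ℚ) (σ := Fin 2) 0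
local notation "inV" => PowerSeries.toMvPowerSeries (R := ℚ) (σ := Fin 2) 1

section OneVariable

theorem coeff_inv_one_sub_pow (d n : ℕ) :
    coeff n ((1 - X : ℚ⟦X⟧) ^ (d + 1))⁻¹ = (d + n).choose d := by
  rw [← (PowerSeries.eq_inv_iff_mul_eq_one (by simp)).mpr
    (mk_add_choose_mul_one_sub_pow_eq_one ℚ d), coeff_mk]

theorem coeff_inv_one_sub (n : ℕ) : coeff n (1 - X : ℚ⟦X⟧)⁻¹ = 1 := by
  simpa using coeff_inv_one_sub_pow 0 n

theorem coeff_inv_one_add_pow (d n : ℕ) :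
    coeff n ((1 + X : ℚ⟦X⟧) ^ (d + 1))⁻¹ = (-1) ^ n * (d + n).choose d := by
  have h := congrArg (rescale (-1 : ℚ)) (mk_add_choose_mul_one_sub_pow_eq_one ℚ d)
  rw [map_mul, map_pow, map_sub, map_one, rescale_X, rescale_mk, map_neg, map_one] at h
  rw [← (PowerSeries.eq_inv_iff_mul_eq_one (by simp)).mpr (by simpa [sub_eq_add_neg] using h),
    coeff_mk]

theorem abs_coeff_inv_one_add_X_sq_le (n : ℕ) : |coeff n (1 + X ^ 2 : ℚ⟦X⟧)⁻¹| ≤ 1 := by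
  set S : ℚ⟦X⟧ := (1 + X ^ 2)⁻¹
  have hS : S * (1 + X ^ 2) = 1 := PowerSeries.inv_mul_cancel _ (by simp)
  induction n using Nat.strong_induction_on with
  | _ n ih =>
    have h := congrArg (coeff n) hS
    rw [mul_add, mul_one, map_add, coeff_mul_X_pow', coeff_one] at h
    rcases Nat.lt_or_ge n 2 with hn | hn
    · rw [if_neg (by omega)] at h
      interval_cases n <;> simp at h <;> simp [h]
    · rw [if_pos hn, if_neg (by omega)] at h
      rw [show coeff n S = - coeff (n - 2) S by linarith, abs_neg]
      exact ih _ (by omega)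

end OneVariable

section TwoVariables

theorem coeff_toMvPowerSeries {σ R : Type*} [DecidableEq σ] [CommSemiring R] (f : R⟦X⟧) (i : σ)
    (e : σ →₀ ℕ) :
    MvPowerSeries.coeff e (f.toMvPowerSeries i) =
      if e = Finsupp.single i (e i) then coeff (e i) f else 0 := by
  split_ifs with h
  · have key := MvPowerSeries.coeff_embDomain_rename (R := R) (Function.Embedding.punit i) f
      (Finsupp.single () (e i))
    rw [Finsupp.embDomain_single] at key
    conv_lhs => rw [h]
    exact key
  · refine MvPowerSeries.coeff_rename_eq_zero _ _ ?_
    rintro ⟨d, rfl⟩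
    obtain ⟨n, rfl⟩ : ∃ n, d = Finsupp.single () n := ⟨d (), Finsupp.unique_single d⟩
    simp at h

theorem c_add (a b : ℕ) (F G : Q2) : c a b (F + G) = c a b F + c a b G :=
  map_add _ F G

theorem c_ofNat_mul (a b m : ℕ) [m.AtLeastTwo] (F : Q2) :
    c a b (OfNat.ofNat m * F) = OfNat.ofNat m * c a b F := by
  rw [c, c, ← map_ofNat (MvPowerSeries.C (σ := Fin 2) (R := ℚ)) m, MvPowerSeries.coeff_C_mul]

theorem c_toMvPowerSeries_mul (f g : ℚ⟦X⟧) (a b : ℕ) :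
    c a b (inT f * inV g) = coeff a f * coeff b g := by
  rw [c, MvPowerSeries.coeff_mul, Finset.sum_eq_single (Finsupp.single 0 a, Finsupp.single 1 b)]
  · simp [coeff_toMvPowerSeries]
  · rintro ⟨e₁, e₂⟩ he hne
    rw [coeff_toMvPowerSeries, coeff_toMvPowerSeries]
    split_ifs with h₁ h₂ <;> try simp
    rw [HasAntidiagonal.mem_antidiagonal] at he
    dsimp only at he h₁ h₂
    have ha : e₁ 0 = a := by
      have := congrArg (· 0) he
      rw [h₂] at this
      simpa [mon] using this
    have hb : e₂ 1 = b := by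
      have := congrArg (· 1) he
      rw [h₁] at this
      simpa [mon] using this
    exact absurd (by rw [h₁, h₂, ha, hb]) hne
  · simp [mon]

theorem c_toMvPowerSeries_one (g : ℚ⟦X⟧) (a b : ℕ) :
    c a b (inV g) = if a = 0 then coeff b g else 0 := by
  simpa [coeff_one] using c_toMvPowerSeries_mul 1 g a b

theorem c_mul_Xv_one_mul_Xv_zero (F : Q2) (a b : ℕ) :
    c a b (F * (Xv 1 * Xv 0)) = if 0 < a ∧ 0 < b then c (a - 1) (b - 1) F else 0 := by
  have hXY : Xv 1 * Xv 0 = MvPowerSeries.monomial (mon 1 1) 1 := by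
    rw [Xv, Xv, MvPowerSeries.X_def, MvPowerSeries.X_def, MvPowerSeries.monomial_mul_monomial,
      mon, add_comm, mul_one]
  have hle : mon 1 1 ≤ mon a b ↔ 0 < a ∧ 0 < b := by
    simp [mon, Finsupp.le_def, Fin.forall_fin_two, Nat.one_le_iff_ne_zero, Nat.pos_iff_ne_zero]
  have hsub : mon a b - mon 1 1 = mon (a - 1) (b - 1) := by
    ext i
    fin_cases i <;> simp [mon]
  rw [c, hXY, MvPowerSeries.coeff_mul_monomial, mul_one, hsub, c]
  exact if_congr hle rfl rfl

/-- `G = g(v) + v t G`, and `g(v)` has no monomial of positive `t`-degree. -/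
theorem c_eq_zero_of_mul_one_sub_Xv_mul_Xv {G : Q2} {g : ℚ⟦X⟧}
    (hG : G * (1 - Xv 1 * Xv 0) = inV g) {a b : ℕ} (hab : b < a) : c a b G = 0 := by
  have hshift : ∀ a b, 0 < a → c a b G = c a b (G * (Xv 1 * Xv 0)) := fun a b ha => by
    have h := congrArg (c a b) hG
    rw [c_toMvPowerSeries_one, if_neg ha.ne', mul_sub, mul_one] at h
    simpa [c, sub_eq_zero] using h
  induction b generalizing a with
  | zero => rw [hshift a 0 (by omega), c_mul_Xv_one_mul_Xv_zero, if_neg (by omega)]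
  | succ b ih =>
    rw [hshift a (b + 1) (by omega), c_mul_Xv_one_mul_Xv_zero, if_pos (by omega)]
    exact ih (by omega)

end TwoVariables

section Growth

theorem isBigO_top_of_abs_le {α : Type*} {f g : α → ℚ} (C : ℚ) (h : ∀ x, |f x| ≤ C * |g x|) :
    f =O[⊤] g :=
  isBigO_top.mpr ⟨C, fun x => by
    rw [← Rat.norm_cast_real, ← Rat.norm_cast_real, Real.norm_eq_abs, Real.norm_eq_abs]
    exact_mod_cast h x⟩

theorem exists_pos_abs_le_of_isBigO_principal {α : Type*} {s : Set α} {f g : α → ℚ}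
    (h : f =O[𝓟 s] g) : ∃ C : ℚ, 0 < C ∧ ∀ x ∈ s, |f x| ≤ C * |g x| := by
  obtain ⟨C, hC, hfg⟩ := h.exists_pos
  refine ⟨⌈C⌉₊, by exact_mod_cast Nat.ceil_pos.mpr hC, fun x hx => ?_⟩
  have h := isBigOWith_principal.mp hfg x hx
  rw [← Rat.norm_cast_real, ← Rat.norm_cast_real, Real.norm_eq_abs, Real.norm_eq_abs] at h
  have h' : |(f x : ℝ)| ≤ (⌈C⌉₊ : ℝ) * |(g x : ℝ)| :=
    h.trans (mul_le_mul_of_nonneg_right (Nat.le_ceil C) (abs_nonneg _))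
  exact_mod_cast h'

theorem isBigO_add_one_pow_of_le {k l : ℕ} (h : k ≤ l) :
    (fun n : ℕ => ((n : ℚ) + 1) ^ k) =O[⊤] fun n : ℕ => ((n : ℚ) + 1) ^ l :=
  isBigO_top_of_abs_le 1 fun n => by
    rw [one_mul, abs_of_nonneg (by positivity), abs_of_nonneg (by positivity)]
    exact pow_le_pow_right₀ (by linarith [n.cast_nonneg (α := ℚ)]) h

theorem isBigO_choose (d : ℕ) :
    (fun n : ℕ => ((d + n).choose d : ℚ)) =O[⊤] fun n : ℕ => ((n : ℚ) + 1) ^ d :=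
  isBigO_top_of_abs_le 1 fun n => by
    rw [one_mul, abs_of_nonneg (by positivity), abs_of_nonneg (by positivity)]
    exact_mod_cast add_comm n d ▸ Nat.choose_add_le_add_one_pow n d

theorem isBigO_pow_div_factorial (d : ℕ) :
    (fun n : ℕ => (n : ℚ) ^ d / (d.factorial : ℚ)) =O[⊤] fun n : ℕ => ((n : ℚ) + 1) ^ d :=
  isBigO_top_of_abs_le 1 fun n => by
    rw [one_mul, abs_of_nonneg (by positivity), abs_of_nonneg (by positivity)]
    calc (n : ℚ) ^ d / (d.factorial : ℚ) ≤ (n : ℚ) ^ d :=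
          div_le_self (by positivity) (by exact_mod_cast d.factorial_pos)
      _ ≤ ((n : ℚ) + 1) ^ d := pow_le_pow_left₀ n.cast_nonneg (by linarith) d

/-- Writing `E_d = C(d + n, d) - nᵈ / d!`, the identity
`(d + 1) C(d + 1 + n, d + 1) = (d + 1 + n) C(d + n, d)` gives
`E_{d+1} = C(d + n, d) + n E_d / (d + 1)`. -/
theorem choose_sub_pow_div_bounds (d n : ℕ) :
    0 ≤ ((d + n).choose d : ℚ) - (n : ℚ) ^ d / (d.factorial : ℚ) ∧
      ((n : ℚ) + 1) * (((d + n).choose d : ℚ) - (n : ℚ) ^ d / (d.factorial : ℚ)) ≤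
        d * ((n : ℚ) + 1) ^ d := by
  induction d with
  | zero => simp
  | succ d ih =>
    obtain ⟨hE₀, hE₁⟩ := ih
    set E := ((d + n).choose d : ℚ) - (n : ℚ) ^ d / (d.factorial : ℚ)
    have hB : ((d + n).choose d : ℚ) ≤ ((n : ℚ) + 1) ^ d := by
      exact_mod_cast add_comm n d ▸ Nat.choose_add_le_add_one_pow n d
    have hrec : ((d + 1 + n).choose (d + 1) : ℚ) - (n : ℚ) ^ (d + 1) / ((d + 1).factorial : ℚ) =
        (d + n).choose d + n * E / (d + 1) := by
      have h := Nat.add_one_mul_choose_eq (d + n) d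
      rw [show d + n + 1 = d + 1 + n by omega] at h
      have hC : ((d + 1 + n).choose (d + 1) : ℚ) = (d + 1 + n) * (d + n).choose d / (d + 1) := by
        rw [eq_div_iff (by positivity)]
        exact_mod_cast h.symm
      rw [hC, Nat.factorial_succ]
      simp only [E]
      push_cast
      field_simp
      ring
    rw [hrec]
    have hn : (0 : ℚ) ≤ n := n.cast_nonneg
    have hpow : (0 : ℚ) ≤ ((n : ℚ) + 1) ^ d := by positivity
    have hnE : (n : ℚ) * E / (d + 1) ≤ d * ((n : ℚ) + 1) ^ d := by
      rw [div_le_iff₀ (by positivity)]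
      calc (n : ℚ) * E ≤ (n + 1) * E := by nlinarith
        _ ≤ d * ((n : ℚ) + 1) ^ d := hE₁
        _ ≤ d * ((n : ℚ) + 1) ^ d * (d + 1) :=
          le_mul_of_one_le_right (by positivity) (by linarith)
    push_cast
    refine ⟨by positivity, ?_⟩
    rw [pow_succ]
    nlinarith

theorem isBigO_choose_sub_pow_div (d : ℕ) :
    (fun n : ℕ => ((d + n).choose d : ℚ) - (n : ℚ) ^ d / (d.factorial : ℚ)) =O[⊤]
      fun n : ℕ => ((n : ℚ) + 1) ^ (d - 1) := by
  refine isBigO_top_of_abs_le d fun n => ?_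
  obtain ⟨h₀, h₁⟩ := choose_sub_pow_div_bounds d n
  rw [abs_of_nonneg h₀, abs_of_nonneg (by positivity)]
  refine le_of_mul_le_mul_left ?_ (by positivity : (0 : ℚ) < n + 1)
  rcases d with _ | d
  · simp
  · have h : ((n : ℚ) + 1) * ((d + 1 : ℕ) * ((n : ℚ) + 1) ^ (d + 1 - 1)) =
        (d + 1 : ℕ) * ((n : ℚ) + 1) ^ (d + 1) := by
      rw [Nat.add_sub_cancel]
      ring
    linarith

theorem isBigO_mul_fst_snd {f g : ℕ → ℚ} {i j k : ℕ}
    (hf : f =O[⊤] fun n : ℕ => ((n : ℚ) + 1) ^ i) (hg : g =O[⊤] fun n : ℕ => ((n : ℚ) + 1) ^ j)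
    (hk : i + j ≤ k) :
    (fun p : ℕ × ℕ => f p.1 * g p.2) =O[⊤] fun p : ℕ × ℕ => ((p.1 : ℚ) + p.2 + 1) ^ k := by
  refine ((hf.comp_tendsto (tendsto_top (f := Prod.fst))).mul
    (hg.comp_tendsto (tendsto_top (f := Prod.snd)))).trans (isBigO_top_of_abs_le 1 fun p => ?_)
  have ha : (0 : ℚ) ≤ p.1 := p.1.cast_nonneg
  have hb : (0 : ℚ) ≤ p.2 := p.2.cast_nonneg
  rw [Function.comp_apply, Function.comp_apply, one_mul, abs_of_nonneg (by positivity),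
    abs_of_nonneg (by positivity)]
  calc ((p.1 : ℚ) + 1) ^ i * ((p.2 : ℚ) + 1) ^ j
      ≤ ((p.1 : ℚ) + p.2 + 1) ^ i * ((p.1 : ℚ) + p.2 + 1) ^ j := by gcongr <;> linarith
    _ = ((p.1 : ℚ) + p.2 + 1) ^ (i + j) := (pow_add _ _ _).symm
    _ ≤ ((p.1 : ℚ) + p.2 + 1) ^ k := pow_le_pow_right₀ (by linarith) hk

def HasCoeffGrowth (k : ℕ) (f : ℚ⟦X⟧) : Prop :=
  (fun n => coeff n f) =O[⊤] fun n : ℕ => ((n : ℚ) + 1) ^ k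

namespace HasCoeffGrowth

variable {k : ℕ} {f g : ℚ⟦X⟧}

theorem add (hf : HasCoeffGrowth k f) (hg : HasCoeffGrowth k g) : HasCoeffGrowth k (f + g) := by
  simpa only [HasCoeffGrowth, map_add] using IsBigO.add hf hg

theorem sub (hf : HasCoeffGrowth k f) (hg : HasCoeffGrowth k g) : HasCoeffGrowth k (f - g) := by
  simpa only [HasCoeffGrowth, map_sub] using IsBigO.sub hf hg

theorem nsmul (m : ℕ) (hf : HasCoeffGrowth k f) : HasCoeffGrowth k (m • f) := by
  have h : (fun n => coeff n (m • f)) = fun n => (m : ℚ) * coeff n f := by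
    funext n
    rw [map_nsmul, nsmul_eq_mul]
  rw [HasCoeffGrowth, h]
  exact IsBigO.const_mul_left hf (m : ℚ)

end HasCoeffGrowth

theorem hasCoeffGrowth_inv_one_sub_pow {d k : ℕ} (h : d ≤ k) :
    HasCoeffGrowth k ((1 - X : ℚ⟦X⟧) ^ (d + 1))⁻¹ := by
  simpa [HasCoeffGrowth, coeff_inv_one_sub_pow] using
    (isBigO_choose d).trans (isBigO_add_one_pow_of_le h)

theorem hasCoeffGrowth_inv_one_add_pow {d k : ℕ} (h : d ≤ k) :
    HasCoeffGrowth k ((1 + X : ℚ⟦X⟧) ^ (d + 1))⁻¹ := by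
  refine (IsBigO.trans ?_ (isBigO_choose d)).trans (isBigO_add_one_pow_of_le h)
  refine isBigO_top_of_abs_le 1 fun n => ?_
  simp [coeff_inv_one_add_pow, abs_mul]

theorem hasCoeffGrowth_inv_one_sub (k : ℕ) : HasCoeffGrowth k (1 - X : ℚ⟦X⟧)⁻¹ := by
  simpa using hasCoeffGrowth_inv_one_sub_pow (Nat.zero_le k)

theorem hasCoeffGrowth_inv_one_add (k : ℕ) : HasCoeffGrowth k (1 + X : ℚ⟦X⟧)⁻¹ := by
  simpa using hasCoeffGrowth_inv_one_add_pow (Nat.zero_le k)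

theorem hasCoeffGrowth_X_mul_inv_one_add_X_sq (k : ℕ) :
    HasCoeffGrowth k (X * (1 + X ^ 2 : ℚ⟦X⟧)⁻¹) := by
  refine (isBigO_top_of_abs_le 1 fun n => ?_).trans (isBigO_add_one_pow_of_le (Nat.zero_le k))
  rcases n with _ | n
  · simp
  · simpa [coeff_succ_X_mul] using abs_coeff_inv_one_add_X_sq_le n

end Growth

section PartialFractions

/-! `lowerₖ` is the coefficient of `(1 - t)⁻ᵏ` in `1024 W` minus its leading term, `altPart` the
coefficient of `(1 + t)⁻¹` and `diagPart` that of `(1 - v t)⁻¹`, all as series in `v`. -/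

noncomputable def lower₃ : ℚ⟦X⟧ :=
  24 • (1 - X)⁻¹ + 40 • ((1 - X) ^ 2)⁻¹ + 64 • ((1 - X) ^ 3)⁻¹ + 96 • ((1 - X) ^ 4)⁻¹
    + 128 • ((1 - X) ^ 5)⁻¹ + 24 • (1 + X)⁻¹ + 8 • ((1 + X) ^ 2)⁻¹

noncomputable def lower₂ : ℚ⟦X⟧ :=
  34 • (1 - X)⁻¹ + 42 • ((1 - X) ^ 2)⁻¹ + 44 • ((1 - X) ^ 3)⁻¹ + 32 • ((1 - X) ^ 4)⁻¹
    - 32 • ((1 - X) ^ 6)⁻¹ + 34 • (1 + X)⁻¹ + 26 • ((1 + X) ^ 2)⁻¹ + 12 • ((1 + X) ^ 3)⁻¹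

noncomputable def lower₁ : ℚ⟦X⟧ :=
  29 • (1 - X)⁻¹ + 25 • ((1 - X) ^ 2)⁻¹ + 12 • ((1 - X) ^ 3)⁻¹ - 10 • ((1 - X) ^ 4)⁻¹
    - 32 • ((1 - X) ^ 5)⁻¹ - 32 • ((1 - X) ^ 6)⁻¹ + 29 • (1 + X)⁻¹ + 33 • ((1 + X) ^ 2)⁻¹
    + 28 • ((1 + X) ^ 3)⁻¹ + 14 • ((1 + X) ^ 4)⁻¹

noncomputable def altPart : ℚ⟦X⟧ :=
  12 • (1 - X)⁻¹ + 4 • ((1 - X) ^ 2)⁻¹ + 28 • (1 + X)⁻¹ + 36 • ((1 + X) ^ 2)⁻¹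
    + 32 • ((1 + X) ^ 3)⁻¹ + 16 • ((1 + X) ^ 4)⁻¹ - 16 • (X * (1 + X ^ 2)⁻¹)

noncomputable def diagPart : ℚ⟦X⟧ :=
  4 • (1 - X)⁻¹ - 9 • ((1 - X) ^ 2)⁻¹ - 22 • ((1 - X) ^ 3)⁻¹ - 22 • ((1 - X) ^ 4)⁻¹
    + 32 • ((1 - X) ^ 6)⁻¹ + 32 • ((1 - X) ^ 7)⁻¹ - 32 • ((1 - X) ^ 8)⁻¹ + 4 • (1 + X)⁻¹
    + ((1 + X) ^ 2)⁻¹ - 2 • ((1 + X) ^ 3)⁻¹ - 2 • ((1 + X) ^ 4)⁻¹ + 16 • (1 + X ^ 2)⁻¹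

theorem map_inv_of_constantCoeff_ne_zero {σ k L : Type*} [Field k] [Field L]
    (ι : MvPowerSeries σ k →+* L) {F : MvPowerSeries σ k}
    (h : MvPowerSeries.constantCoeff F ≠ 0) : ι F⁻¹ = (ι F)⁻¹ :=
  eq_inv_of_mul_eq_one_left (by rw [← map_mul, MvPowerSeries.inv_mul_cancel _ h, map_one])

theorem map_toMvPowerSeries_inv {σ k L : Type*} [Field k] [Field L]
    (ι : MvPowerSeries σ k →+* L) (i : σ) {f : k⟦X⟧} (h : constantCoeff f ≠ 0) :
    ι (f⁻¹.toMvPowerSeries i) = (ι (f.toMvPowerSeries i))⁻¹ :=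
  eq_inv_of_mul_eq_one_left (by
    rw [← map_mul, ← map_mul, PowerSeries.inv_mul_cancel _ h, map_one, map_one])

theorem algebraMap_ne_zero_of_constantCoeff_ne_zero {F : Q2}
    (h : MvPowerSeries.constantCoeff F ≠ 0) : algebraMap Q2 (FractionRing Q2) F ≠ 0 :=
  (IsFractionRing.injective Q2 _).ne_iff' (map_zero _) |>.mpr fun hF => h (by simp [hF])

theorem Wseries_partial_fractions :
    1024 * Wseries =
      inT ((1 - X) ^ 3)⁻¹ * inV (128 • ((1 - X) ^ 6)⁻¹ + lower₃)
      + inT ((1 - X) ^ 2)⁻¹ * inV (64 • ((1 - X) ^ 7)⁻¹ + lower₂)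
      + inT (1 - X)⁻¹ * inV (32 • ((1 - X) ^ 8)⁻¹ + lower₁)
      + inT (1 + X)⁻¹ * inV altPart
      + inV diagPart * (1 - Xv 1 * Xv 0)⁻¹ := by
  apply IsFractionRing.injective Q2 (FractionRing Q2)
  have hx := algebraMap_ne_zero_of_constantCoeff_ne_zero (F := 1 - Xv 0) (by simp [Xv])
  have hx' := algebraMap_ne_zero_of_constantCoeff_ne_zero (F := 1 + Xv 0) (by simp [Xv])
  have hy := algebraMap_ne_zero_of_constantCoeff_ne_zero (F := 1 - Xv 1) (by simp [Xv])
  have hy' := algebraMap_ne_zero_of_constantCoeff_ne_zero (F := 1 + Xv 1) (by simp [Xv])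
  have hy2 := algebraMap_ne_zero_of_constantCoeff_ne_zero (F := 1 + Xv 1 ^ 2) (by simp [Xv])
  have hxy := algebraMap_ne_zero_of_constantCoeff_ne_zero (F := 1 - Xv 1 * Xv 0) (by simp [Xv])
  simp [Wseries, lower₃, lower₂, lower₁, altPart, diagPart, map_inv_of_constantCoeff_ne_zero,
    map_toMvPowerSeries_inv, Xv, map_ofNat] at hx hx' hy hy' hy2 hxy ⊢
  generalize algebraMap Q2 (FractionRing Q2) (MvPowerSeries.X 0) = x at *
  generalize algebraMap Q2 (FractionRing Q2) (MvPowerSeries.X 1) = y at *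
  field_simp
  ring

end PartialFractions

theorem c_Wseries_of_lt {a b : ℕ} (hab : b < a) :
    1024 * c a b Wseries =
      ((2 + a).choose 2 : ℚ) * (128 * ((5 + b).choose 5 : ℚ) + coeff b lower₃)
      + ((1 + a).choose 1 : ℚ) * (64 * ((6 + b).choose 6 : ℚ) + coeff b lower₂)
      + (32 * ((7 + b).choose 7 : ℚ) + coeff b lower₁)
      + coeff a (1 + X : ℚ⟦X⟧)⁻¹ * coeff b altPart := by
  have hdiag : c a b (inV diagPart * (1 - Xv 1 * Xv 0)⁻¹) = 0 := by
    refine c_eq_zero_of_mul_one_sub_Xv_mul_Xv (g := diagPart) ?_ hab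
    rw [mul_assoc, MvPowerSeries.inv_mul_cancel _ (by simp [Xv]), mul_one]
  rw [← c_ofNat_mul, Wseries_partial_fractions]
  simp only [c_add, c_toMvPowerSeries_mul, hdiag, add_zero]
  simp only [map_add, map_nsmul, coeff_inv_one_sub_pow, coeff_inv_one_sub]
  simp only [nsmul_eq_mul]
  push_cast
  ring

theorem hasCoeffGrowth_lower_altPart :
    HasCoeffGrowth 4 lower₃ ∧ HasCoeffGrowth 5 lower₂ ∧ HasCoeffGrowth 6 lower₁ ∧
      HasCoeffGrowth 6 altPart := by
  refine ⟨?_, ?_, ?_, ?_⟩ <;> simp only [lower₃, lower₂, lower₁, altPart] <;>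
  repeat' with_reducible first
    | apply HasCoeffGrowth.add | apply HasCoeffGrowth.sub | apply HasCoeffGrowth.nsmul
    | exact hasCoeffGrowth_inv_one_sub _ | exact hasCoeffGrowth_inv_one_add _
    | exact hasCoeffGrowth_inv_one_sub_pow (by norm_num)
    | exact hasCoeffGrowth_inv_one_add_pow (by norm_num)
    | exact hasCoeffGrowth_X_mul_inv_one_add_X_sq _

noncomputable def leadingTerm (a b : ℕ) : ℚ :=
  (b : ℚ) ^ 7 / ((Nat.factorial 7 : ℚ) * 2 ^ 5)
    + (a : ℚ) * (b : ℚ) ^ 6 / ((Nat.factorial 6 : ℚ) * 2 ^ 4)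
    + (a : ℚ) ^ 2 * (b : ℚ) ^ 5 / ((Nat.factorial 5 : ℚ) * 2 ^ 4)

theorem isBigO_c_Wseries_sub_leadingTerm :
    (fun p : ℕ × ℕ => c p.1 p.2 Wseries - leadingTerm p.1 p.2) =O[𝓟 {p | p.2 < p.1}]
      fun p => ((p.1 : ℚ) + p.2 + 1) ^ 6 := by
  rw [← isBigO_const_mul_left_iff (c := (1024 : ℚ)) (by norm_num)]
  obtain ⟨h₃, h₂, h₁, hq⟩ := hasCoeffGrowth_lower_altPart
  have hone : (fun _ : ℕ => (1 : ℚ)) =O[⊤] fun n : ℕ => ((n : ℚ) + 1) ^ 0 :=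
    isBigO_top_of_abs_le 1 fun _ => by simp
  -- on `b < a`, `1024 (c - leadingTerm)` is the sum of these nine products `f a * g b`
  have hsum : _ =O[⊤] fun p : ℕ × ℕ => ((p.1 : ℚ) + p.2 + 1) ^ 6 :=
    (isBigO_mul_fst_snd (isBigO_choose 2) h₃ (by norm_num)).add
    ((isBigO_mul_fst_snd ((isBigO_choose_sub_pow_div 2).const_mul_left 128) (isBigO_choose 5)
      (by norm_num)).add
    ((isBigO_mul_fst_snd ((isBigO_pow_div_factorial 2).const_mul_left 128)
      (isBigO_choose_sub_pow_div 5) (by norm_num)).add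
    ((isBigO_mul_fst_snd (isBigO_choose 1) h₂ (by norm_num)).add
    ((isBigO_mul_fst_snd ((isBigO_choose_sub_pow_div 1).const_mul_left 64) (isBigO_choose 6)
      (by norm_num)).add
    ((isBigO_mul_fst_snd ((isBigO_pow_div_factorial 1).const_mul_left 64)
      (isBigO_choose_sub_pow_div 6) (by norm_num)).add
    ((isBigO_mul_fst_snd hone h₁ (by norm_num)).add
    ((isBigO_mul_fst_snd (hone.const_mul_left 32) (isBigO_choose_sub_pow_div 7) (by norm_num)).add
    (isBigO_mul_fst_snd (hasCoeffGrowth_inv_one_add 0) hq (by norm_num)))))))))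
  refine (hsum.mono le_top).congr' ?_ EventuallyEq.rfl
  filter_upwards [mem_principal_self _] with ⟨a, b⟩ (hab : b < a)
  dsimp only
  rw [mul_sub (1024 : ℚ), c_Wseries_of_lt hab, leadingTerm]
  simp only [Nat.factorial]
  push_cast
  ring

/-- Corollary 5, first asymptotic: for λ1 > 2λ2 ≥ 0,
m_{(λ1,λ2)}(T) = λ2⁷/(7!·2⁵) + (λ1−λ2)λ2⁶/(6!·2⁴) + (λ1−λ2)²λ2⁵/(5!·2⁴)
+ O((λ1+λ2)⁶), where m_{(λ1,λ2)}(T) is the coefficient of t^{λ1−λ2}v^{λ2} in W. -/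
theorem asymptotics_case_l1_gt_2l2 :
    ∃ C : ℚ, 0 < C ∧ ∀ l1 l2 : ℕ, 2 * l2 < l1 →
      |c (l1 - l2) l2 Wseries
        - ((l2 : ℚ) ^ 7 / ((Nat.factorial 7 : ℚ) * 2 ^ 5)
            + ((l1 : ℚ) - (l2 : ℚ)) * (l2 : ℚ) ^ 6 / ((Nat.factorial 6 : ℚ) * 2 ^ 4)
            + ((l1 : ℚ) - (l2 : ℚ)) ^ 2 * (l2 : ℚ) ^ 5 / ((Nat.factorial 5 : ℚ) * 2 ^ 4))|
      ≤ C * ((l1 : ℚ) + (l2 : ℚ) + 1) ^ 6 := by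
  obtain ⟨C, hC, hbound⟩ :=
    exists_pos_abs_le_of_isBigO_principal isBigO_c_Wseries_sub_leadingTerm
  refine ⟨C, hC, fun l1 l2 hl => ?_⟩
  have h := hbound (l1 - l2, l2) (show l2 < l1 - l2 by omega)
  rw [leadingTerm, Nat.cast_sub (by omega : l2 ≤ l1), sub_add_cancel] at h
  refine h.trans (mul_le_mul_of_nonneg_left ?_ hC.le)
  rw [abs_of_nonneg (by positivity)]
  gcongr
  exact le_add_of_nonneg_right l2.cast_nonneg
end
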